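/- Let ψ₀ > 0, A_θ > 0, and let ψ₂, ψθ₂, A, u, ω, c, f, q, m₂₁, m₂₃ be real numbers with A > 0. Define the 3×3 real matrix M_θ with rows ( −(Ac/A_θ)ω , 0 , 1/A_θ ), ( m₂₁ , (ψ₂/ψ₀)ω , m₂₃ ), ( q − (ψθ₂(A_θ + Ac) − A·A_θ·f)ω² , 0 , 2ψθ₂ω ), and set Υ₂ = (1/A_θ²)(ψθ₂A_θ − Ac/2)² + (1/A_θ)(A(fA_θ + ψθ₂c) − ψθ₂A_θ). If q/A_θ + Υ₂ω² ≥ 0, then the characteristic polynomial of M_θ factors as det(M_θ − λI) = ((ψ₂/ψ₀)ω − λ)(λ − λ₊^θ)(λ − λ₋^θ), so the eigenvalues of M_θ are exactly λ₀^θ = (ψ₂/ψ₀)ω and λ±^θ = ((2ψθ₂A_θ − Ac)/(2A_θ))·ω ± √(q/A_θ + Υ₂ω²), and in particular all eigenvalues of M_θ are real. -/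

import Mathlib

open Matrix

/-- The coefficient matrix `M_θ` (angular direction) of the quasilinear form of the
2D blood-flow model, with the state abstracted into real parameters. -/
noncomputable def Mθ (ψ₀ Aθ ψ₂ ψθ₂ A u ω c f q m₂₁ m₂₃ : ℝ) : Matrix (Fin 3) (Fin 3) ℝ :=
  !![-(A * c / Aθ) * ω, 0, 1 / Aθ;
     m₂₁, (ψ₂ / ψ₀) * ω, m₂₃;
     q - (ψθ₂ * (Aθ + A * c) - A * Aθ * f) * ω ^ 2, 0, 2 * ψθ₂ * ω]

/-!
The middle column of `M_θ` is `(0, (ψ₂/ψ₀)ω, 0)`, so expanding along it splits off the factor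
`(ψ₂/ψ₀)ω - λ`, and what remains is the characteristic polynomial of the `2 × 2` block on the first
and third coordinates. Its mean eigenvalue is `((2ψθ₂A_θ - Ac)/(2A_θ))ω` and its quarter-discriminant
is exactly `q/A_θ + Υ₂ω²`, so the hypothesis makes both roots real. The resulting factorization of
the characteristic polynomial over `ℝ` maps to the complexified matrix, whose spectrum therefore
consists of the same three real numbers.
-/

open Polynomial

namespace Matrix

variable {n : Type*} [Fintype n] [DecidableEq n]

theorem eval_charpoly_eq_neg_one_pow_mul_det {R : Type*} [CommRing R] (M : Matrix n n R) (t : R) :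
    M.charpoly.eval t = (-1) ^ Fintype.card n * (M - t • 1).det := by
  rw [eval_charpoly, ← det_neg, neg_sub, smul_one_eq_diagonal, scalar_apply]

theorem spectrum_eq_of_charpoly_eq {K : Type*} [Field K] {M : Matrix n n K} {a b c : K}
    (h : M.charpoly = (X - C a) * (X - C b) * (X - C c)) : spectrum K M = {a, b, c} := by
  ext z
  simp [mem_spectrum_iff_isRoot_charpoly, h, sub_eq_zero, or_assoc]

theorem spectrum_map_eq_of_charpoly_eq {K L : Type*} [Field K] [Field L] (f : K →+* L)
    {M : Matrix n n K} {a b c : K} (h : M.charpoly = (X - C a) * (X - C b) * (X - C c)) :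
    spectrum L (M.map f) = {f a, f b, f c} :=
  spectrum_eq_of_charpoly_eq (by simp [charpoly_map, h, Polynomial.map_mul])

theorem det_fin_three_sub_smul_one_of_col_one {R : Type*} [CommRing R] (a b d e g h k t : R) :
    (!![a, 0, b; d, e, g; h, 0, k] - t • (1 : Matrix (Fin 3) (Fin 3) R)).det
      = (e - t) * ((a - t) * (k - t) - b * h) := by
  rw [det_fin_three]
  simp only [one_fin_three, smul_of, smul_cons, smul_eq_mul, mul_one, mul_zero, smul_empty,
    sub_apply, of_apply, cons_val', cons_val_zero, cons_val_fin_one, cons_val_one, cons_val]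
  ring

end Matrix

theorem sub_mul_sub_sub_eq_of_sq_eq {K : Type*} [Field K] [NeZero (2 : K)] {a k m s : K}
    (hs : s ^ 2 = ((a - k) / 2) ^ 2 + m) (t : K) :
    (a - t) * (k - t) - m = (t - ((a + k) / 2 + s)) * (t - ((a + k) / 2 - s)) := by
  field_simp at hs ⊢
  linear_combination hs

section Mθ

variable (ψ₀ Aθ ψ₂ ψθ₂ A u ω c f q m₂₁ m₂₃ : ℝ)

theorem Mθ_det_sub_smul_one {Υ₂ s : ℝ} (hAθ : Aθ ≠ 0)
    (hΥ₂ : Υ₂ = (1 / Aθ ^ 2) * (ψθ₂ * Aθ - A * c / 2) ^ 2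
        + (1 / Aθ) * (A * (f * Aθ + ψθ₂ * c) - ψθ₂ * Aθ))
    (hs : s ^ 2 = q / Aθ + Υ₂ * ω ^ 2) (t : ℝ) :
    (Mθ ψ₀ Aθ ψ₂ ψθ₂ A u ω c f q m₂₁ m₂₃ - t • (1 : Matrix (Fin 3) (Fin 3) ℝ)).det
      = ((ψ₂ / ψ₀) * ω - t) * (t - (((2 * ψθ₂ * Aθ - A * c) / (2 * Aθ)) * ω + s))
        * (t - (((2 * ψθ₂ * Aθ - A * c) / (2 * Aθ)) * ω - s)) := by
  have hmean : (-(A * c / Aθ) * ω + 2 * ψθ₂ * ω) / 2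
      = ((2 * ψθ₂ * Aθ - A * c) / (2 * Aθ)) * ω := by
    field_simp
    ring
  have hdisc : q / Aθ + Υ₂ * ω ^ 2 = ((-(A * c / Aθ) * ω - 2 * ψθ₂ * ω) / 2) ^ 2
      + 1 / Aθ * (q - (ψθ₂ * (Aθ + A * c) - A * Aθ * f) * ω ^ 2) := by
    rw [hΥ₂]
    field_simp
    ring
  rw [Mθ, det_fin_three_sub_smul_one_of_col_one, sub_mul_sub_sub_eq_of_sq_eq (hs.trans hdisc),
    hmean]
  ring

theorem Mθ_charpoly {Υ₂ s : ℝ} (hAθ : Aθ ≠ 0)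
    (hΥ₂ : Υ₂ = (1 / Aθ ^ 2) * (ψθ₂ * Aθ - A * c / 2) ^ 2
        + (1 / Aθ) * (A * (f * Aθ + ψθ₂ * c) - ψθ₂ * Aθ))
    (hs : s ^ 2 = q / Aθ + Υ₂ * ω ^ 2) :
    (Mθ ψ₀ Aθ ψ₂ ψθ₂ A u ω c f q m₂₁ m₂₃).charpoly
      = (X - C ((ψ₂ / ψ₀) * ω)) * (X - C (((2 * ψθ₂ * Aθ - A * c) / (2 * Aθ)) * ω + s))
        * (X - C (((2 * ψθ₂ * Aθ - A * c) / (2 * Aθ)) * ω - s)) := by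
  refine Polynomial.funext fun t => ?_
  rw [eval_charpoly_eq_neg_one_pow_mul_det, Mθ_det_sub_smul_one _ _ _ _ _ _ _ _ _ _ _ _ hAθ hΥ₂ hs]
  simp only [Fintype.card_fin, eval_mul, eval_sub, eval_X, eval_C]
  ring

end Mθ

theorem stmt1_general (ψ₀ Aθ ψ₂ ψθ₂ A u ω c f q m₂₁ m₂₃ : ℝ)
    (hAθ : 0 < Aθ)
    (Υ₂ : ℝ)
    (hΥ₂ : Υ₂ = (1 / Aθ ^ 2) * (ψθ₂ * Aθ - A * c / 2) ^ 2
        + (1 / Aθ) * (A * (f * Aθ + ψθ₂ * c) - ψθ₂ * Aθ))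
    (lamP lamM : ℝ)
    (hlamP : lamP = ((2 * ψθ₂ * Aθ - A * c) / (2 * Aθ)) * ω + Real.sqrt (q / Aθ + Υ₂ * ω ^ 2))
    (hlamM : lamM = ((2 * ψθ₂ * Aθ - A * c) / (2 * Aθ)) * ω - Real.sqrt (q / Aθ + Υ₂ * ω ^ 2))
    (hnn : 0 ≤ q / Aθ + Υ₂ * ω ^ 2) :
    (∀ lam : ℝ,
      (Mθ ψ₀ Aθ ψ₂ ψθ₂ A u ω c f q m₂₁ m₂₃ - lam • (1 : Matrix (Fin 3) (Fin 3) ℝ)).det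
        = ((ψ₂ / ψ₀) * ω - lam) * (lam - lamP) * (lam - lamM)) ∧
    spectrum ℝ (Mθ ψ₀ Aθ ψ₂ ψθ₂ A u ω c f q m₂₁ m₂₃) = {(ψ₂ / ψ₀) * ω, lamP, lamM} ∧
    (∀ z ∈ spectrum ℂ ((Mθ ψ₀ Aθ ψ₂ ψθ₂ A u ω c f q m₂₁ m₂₃).map (fun x : ℝ => (x : ℂ))),
      z.im = 0) := by
  have hs := Real.sq_sqrt hnn
  have hcharpoly := Mθ_charpoly ψ₀ Aθ ψ₂ ψθ₂ A u ω c f q m₂₁ m₂₃ hAθ.ne' hΥ₂ hs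
  rw [← hlamP, ← hlamM] at hcharpoly
  refine ⟨fun t => ?_, spectrum_eq_of_charpoly_eq hcharpoly, fun z hz => ?_⟩
  · rw [hlamP, hlamM]
    exact Mθ_det_sub_smul_one ψ₀ Aθ ψ₂ ψθ₂ A u ω c f q m₂₁ m₂₃ hAθ.ne' hΥ₂ hs t
  · rw [show (fun x : ℝ => (x : ℂ)) = Complex.ofRealHom from rfl,
      spectrum_map_eq_of_charpoly_eq Complex.ofRealHom hcharpoly] at hz
    rcases hz with rfl | rfl | rfl <;> exact Complex.ofReal_im _

theorem stmt1 (ψ₀ Aθ ψ₂ ψθ₂ A u ω c f q m₂₁ m₂₃ : ℝ)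
    (hψ₀ : 0 < ψ₀) (hAθ : 0 < Aθ) (hA : 0 < A)
    (Υ₂ : ℝ)
    (hΥ₂ : Υ₂ = (1 / Aθ ^ 2) * (ψθ₂ * Aθ - A * c / 2) ^ 2
        + (1 / Aθ) * (A * (f * Aθ + ψθ₂ * c) - ψθ₂ * Aθ))
    (lamP lamM : ℝ)
    (hlamP : lamP = ((2 * ψθ₂ * Aθ - A * c) / (2 * Aθ)) * ω + Real.sqrt (q / Aθ + Υ₂ * ω ^ 2))
    (hlamM : lamM = ((2 * ψθ₂ * Aθ - A * c) / (2 * Aθ)) * ω - Real.sqrt (q / Aθ + Υ₂ * ω ^ 2))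
    (hnn : 0 ≤ q / Aθ + Υ₂ * ω ^ 2) :
    (∀ lam : ℝ,
      (Mθ ψ₀ Aθ ψ₂ ψθ₂ A u ω c f q m₂₁ m₂₃ - lam • (1 : Matrix (Fin 3) (Fin 3) ℝ)).det
        = ((ψ₂ / ψ₀) * ω - lam) * (lam - lamP) * (lam - lamM)) ∧
    spectrum ℝ (Mθ ψ₀ Aθ ψ₂ ψθ₂ A u ω c f q m₂₁ m₂₃) = {(ψ₂ / ψ₀) * ω, lamP, lamM} ∧
    (∀ z ∈ spectrum ℂ ((Mθ ψ₀ Aθ ψ₂ ψθ₂ A u ω c f q m₂₁ m₂₃).map (fun x : ℝ => (x : ℂ))),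
      z.im = 0) :=
  stmt1_general ψ₀ Aθ ψ₂ ψθ₂ A u ω c f q m₂₁ m₂₃ hAθ Υ₂ hΥ₂ lamP lamM hlamP hlamM hnn
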